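/- arXiv:1906.05880 — 3 statements merged into one kernel-verified Lean document; each statement's English description precedes it below -/
import Mathlib

section
/- Let γ ∈ (0,1), s < r < t, and x, y ∈ ℝ. Define J := ∫_ℝ |z|^{-γ} exp(-(1/2)((x-z)²/(t-r) + (z-y)²/(r-s))) dz. Then for every Δ > 0, J ≤ 2Δ^{1-γ}/(1-γ) + Δ^{-γ} · (2π)^{1/2} · ((t-r)(r-s)/(t-s))^{1/2} · exp(-(x-y)²/(2(t-s))). -/
open Real Set MeasureTheory

/-!
Split the line at `|z| = Δ`. On `[-Δ, Δ]` the Gaussian factor is at most `1`, and `|z|^{-γ}`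
integrates to `2Δ^{1-γ}/(1-γ)`. Outside, `|z|^{-γ} ≤ Δ^{-γ}`, and the remaining Gaussian
factor is integrated over all of `ℝ`: completing the square in `z` exhibits it as
`exp(-(x-y)²/(2(t-s)))` times a Gaussian of variance `(t-r)(r-s)/(t-s)`.
-/

lemma intervalIntegrable_abs_rpow {r : ℝ} (hr : -1 < r) (a b : ℝ) :
    IntervalIntegrable (fun x : ℝ => |x| ^ r) volume a b := by
  have from_zero_of_nonneg :
      ∀ c, 0 ≤ c → IntervalIntegrable (fun x : ℝ => |x| ^ r) volume 0 c := by
    intro c hc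
    have h := intervalIntegral.intervalIntegrable_rpow' hr (a := 0) (b := c)
    rw [intervalIntegrable_iff_integrableOn_Ioc_of_le hc] at h ⊢
    exact h.congr_fun (fun x hx => by rw [abs_of_pos hx.1]) measurableSet_Ioc
  have from_zero : ∀ c, IntervalIntegrable (fun x : ℝ => |x| ^ r) volume 0 c := by
    intro c
    rcases le_total 0 c with hc | hc
    · exact from_zero_of_nonneg c hc
    · have h := from_zero_of_nonneg (-c) (neg_nonneg.2 hc)
      rw [IntervalIntegrable.iff_comp_neg] at h
      simpa only [abs_neg, neg_zero, neg_neg] using h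
  exact (from_zero a).symm.trans (from_zero b)

lemma integral_Icc_abs_rpow {r Δ : ℝ} (hr : -1 < r) (hΔ : 0 ≤ Δ) :
    ∫ x in Icc (-Δ) Δ, |x| ^ r = 2 * Δ ^ (r + 1) / (r + 1) := by
  have indicator_abs : ∀ x : ℝ,
      (Icc (-Δ) Δ).indicator (fun x => |x| ^ r) x = (Iic Δ).indicator (fun u => u ^ r) |x| := by
    intro x
    simp only [indicator, mem_Icc, mem_Iic, ← abs_le]
  rw [← integral_indicator measurableSet_Icc, funext indicator_abs, integral_comp_abs,
    setIntegral_indicator measurableSet_Iic, Ioi_inter_Iic, ← intervalIntegral.integral_of_le hΔ,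
    integral_rpow (Or.inl hr), zero_rpow (by linarith)]
  ring

lemma neg_half_mul_sq_div_add_sq_div {a b : ℝ} (ha : a ≠ 0) (hb : b ≠ 0) (hab : a + b ≠ 0)
    (x y z : ℝ) :
    -(1 / 2) * ((x - z) ^ 2 / a + (z - y) ^ 2 / b) =
      -((x - y) ^ 2) / (2 * (a + b)) +
        -((a + b) / (2 * a * b)) * (z - (b * x + a * y) / (a + b)) ^ 2 := by
  field_simp
  ring

lemma integrable_exp_neg_half_mul_sq_div_add_sq_div {a b : ℝ} (ha : 0 < a) (hb : 0 < b)
    (x y : ℝ) :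
    Integrable (fun z : ℝ => exp (-(1 / 2) * ((x - z) ^ 2 / a + (z - y) ^ 2 / b))) := by
  simp_rw [neg_half_mul_sq_div_add_sq_div ha.ne' hb.ne' (add_pos ha hb).ne', exp_add]
  exact ((integrable_exp_neg_mul_sq (by positivity)).comp_sub_right _).const_mul _

lemma integral_exp_neg_half_mul_sq_div_add_sq_div {a b : ℝ} (ha : 0 < a) (hb : 0 < b)
    (x y : ℝ) :
    ∫ z : ℝ, exp (-(1 / 2) * ((x - z) ^ 2 / a + (z - y) ^ 2 / b)) =
      (2 * π) ^ ((1 : ℝ) / 2) * √(a * b / (a + b)) * exp (-((x - y) ^ 2) / (2 * (a + b))) := by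
  have variance : π / ((a + b) / (2 * a * b)) = 2 * π * (a * b / (a + b)) := by
    field_simp
  simp_rw [neg_half_mul_sq_div_add_sq_div ha.ne' hb.ne' (add_pos ha hb).ne', exp_add]
  rw [integral_const_mul,
    integral_sub_right_eq_self (fun z => exp (-((a + b) / (2 * a * b)) * z ^ 2)), integral_gaussian,
    variance, sqrt_mul (by positivity), sqrt_eq_rpow]
  ring

lemma exp_neg_half_mul_sq_div_add_sq_div_le_one {a b : ℝ} (ha : 0 ≤ a) (hb : 0 ≤ b)
    (x y z : ℝ) : exp (-(1 / 2) * ((x - z) ^ 2 / a + (z - y) ^ 2 / b)) ≤ 1 :=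
  exp_le_one_iff.2 (mul_nonpos_of_nonpos_of_nonneg (by norm_num) (by positivity))

lemma integral_abs_rpow_neg_mul_le {γ Δ : ℝ} (hγ0 : 0 ≤ γ) (hγ1 : γ < 1) (hΔ : 0 < Δ)
    {g : ℝ → ℝ} (hg : Integrable g) (hg0 : ∀ z, 0 ≤ g z) (hg1 : ∀ z, g z ≤ 1) :
    ∫ z, |z| ^ (-γ) * g z ≤ 2 * Δ ^ (1 - γ) / (1 - γ) + Δ ^ (-γ) * ∫ z, g z := by
  have hsing : IntegrableOn (fun z : ℝ => |z| ^ (-γ)) (Icc (-Δ) Δ) :=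
    (intervalIntegrable_iff_integrableOn_Icc_of_le (by linarith)).1
      (intervalIntegrable_abs_rpow (by linarith) _ _)
  have pointwise : ∀ z, |z| ^ (-γ) * g z ≤
      (Icc (-Δ) Δ).indicator (fun z => |z| ^ (-γ)) z + Δ ^ (-γ) * g z := by
    intro z
    by_cases hz : z ∈ Icc (-Δ) Δ
    · rw [indicator_of_mem hz]
      have := mul_le_of_le_one_right (rpow_nonneg (abs_nonneg z) (-γ)) (hg1 z)
      have := mul_nonneg (rpow_nonneg hΔ.le (-γ)) (hg0 z)
      linarith
    · have hΔz : Δ ≤ |z| := by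
        by_contra! h
        exact hz (abs_le.1 h.le)
      rw [indicator_of_notMem hz, zero_add]
      exact mul_le_mul_of_nonneg_right (rpow_le_rpow_of_nonpos hΔ hΔz (by linarith)) (hg0 z)
  calc ∫ z, |z| ^ (-γ) * g z
      ≤ ∫ z, (Icc (-Δ) Δ).indicator (fun z => |z| ^ (-γ)) z + Δ ^ (-γ) * g z :=
        integral_mono_of_nonneg
          (ae_of_all _ fun z => mul_nonneg (rpow_nonneg (abs_nonneg z) _) (hg0 z))
          ((hsing.integrable_indicator measurableSet_Icc).add (hg.const_mul _))
          (ae_of_all _ pointwise)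
    _ = 2 * Δ ^ (1 - γ) / (1 - γ) + Δ ^ (-γ) * ∫ z, g z := by
        rw [integral_add (hsing.integrable_indicator measurableSet_Icc) (hg.const_mul _),
          integral_indicator measurableSet_Icc, integral_Icc_abs_rpow (by linarith) hΔ.le,
          integral_const_mul, neg_add_eq_sub]

/-- For γ ∈ (0,1), s < r < t and any Δ > 0, the integral
J = ∫_ℝ |z|^{-γ} exp(-(1/2)((x-z)²/(t-r) + (z-y)²/(r-s))) dz satisfies
J ≤ 2Δ^{1-γ}/(1-γ) + Δ^{-γ}·√(2π)·√((t-r)(r-s)/(t-s))·exp(-(x-y)²/(2(t-s))). -/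
theorem stmt_3 (γ : ℝ) (hγ : γ ∈ Ioo (0 : ℝ) 1) (s r t x y : ℝ)
    (hsr : s < r) (hrt : r < t) (Δ : ℝ) (hΔ : 0 < Δ) :
    (∫ z : ℝ, |z| ^ (-γ) *
        Real.exp (-(1 / 2) * ((x - z) ^ 2 / (t - r) + (z - y) ^ 2 / (r - s)))) ≤
      2 * Δ ^ (1 - γ) / (1 - γ) +
        Δ ^ (-γ) * ((2 * π) ^ ((1 : ℝ) / 2) *
          Real.sqrt ((t - r) * (r - s) / (t - s)) *
            Real.exp (-((x - y) ^ 2) / (2 * (t - s)))) := by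
  have htr : 0 < t - r := sub_pos.2 hrt
  have hrs : 0 < r - s := sub_pos.2 hsr
  calc _ ≤ 2 * Δ ^ (1 - γ) / (1 - γ) + Δ ^ (-γ) *
          ∫ z : ℝ, exp (-(1 / 2) * ((x - z) ^ 2 / (t - r) + (z - y) ^ 2 / (r - s))) :=
        integral_abs_rpow_neg_mul_le hγ.1.le hγ.2 hΔ
          (integrable_exp_neg_half_mul_sq_div_add_sq_div htr hrs x y) (fun _ => (exp_pos _).le)
          (exp_neg_half_mul_sq_div_add_sq_div_le_one htr.le hrs.le x y)
    _ = _ := by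
        rw [integral_exp_neg_half_mul_sq_div_add_sq_div htr hrs, sub_add_sub_cancel]
end

section
/- Let γ ∈ (0,1), δ ∈ (0,1), s < r < t, and x, y ∈ ℝ. Then J_δ(x,t,y,s;r) := ∫_ℝ |z|^{-γ} exp(-(1-δ)/2 · ((x-z)²/(t-r) + (z-y)²/(r-s))) dz satisfies J_δ(x,t,y,s;r) ≤ κ₁(γ) · (1-δ)^{(γ-1)/2} · ((t-r)(r-s)/(t-s))^{(1-γ)/2} · exp(-(1-γ)(1-δ)(x-y)²/(2(t-s))), where κ₁(γ) := (2π)^{(1-γ)/2} κ(γ) (2/(1-γ))^γ and κ(γ) := (γ/(1-γ))^{1-γ} + (γ/(1-γ))^{-γ}. -/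
/-! Completing the square in `z` factors the integrand as `exp (-(1-δ)(x-y)²/(2(t-s)))` times
`|z| ^ (-γ)` against a single Gaussian `exp (-c (z - m)²)`. Splitting that integral at `|z| = ρ`
bounds it by `2 ρ ^ (1-γ) / (1-γ) + ρ ^ (-γ) √(π/c)`, and the minimising choice `ρ = γ √(π/c) / 2`
turns this into `κ(γ) (2/(1-γ)) ^ γ (π/c) ^ ((1-γ)/2)`. The factor `1 - γ` in the final exponent
only weakens the bound. -/

open Real Set MeasureTheory

noncomputable section

/-- κ(γ) := (γ/(1-γ))^{1-γ} + (γ/(1-γ))^{-γ}. -/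
def kappa (γ : ℝ) : ℝ := (γ / (1 - γ)) ^ (1 - γ) + (γ / (1 - γ)) ^ (-γ)

/-- κ₁(γ) := (2π)^{(1-γ)/2} κ(γ) (2/(1-γ))^γ. -/
def kappa1 (γ : ℝ) : ℝ := (2 * π) ^ ((1 - γ) / 2) * kappa γ * (2 / (1 - γ)) ^ γ

lemma integral_indicator_Icc_abs_rpow_neg {γ ρ : ℝ} (hγ : γ < 1) (hρ : 0 ≤ ρ) :
    ∫ z, (Icc (-ρ) ρ).indicator (fun z => |z| ^ (-γ)) z = 2 * (ρ ^ (1 - γ) / (1 - γ)) := by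
  have h_abs : (Icc (-ρ) ρ).indicator (fun z => |z| ^ (-γ))
      = fun z => (Iic ρ).indicator (fun u => u ^ (-γ)) |z| := by
    ext z
    simp only [indicator, mem_Icc, mem_Iic, ← abs_le]
  rw [h_abs, integral_comp_abs, setIntegral_indicator measurableSet_Iic, Ioi_inter_Iic,
    ← intervalIntegral.integral_of_le hρ, integral_rpow (Or.inl (by linarith)),
    zero_rpow (by linarith), neg_add_eq_sub]
  ring

lemma integral_abs_rpow_neg_mul_le_s6 {γ ρ : ℝ} (hγ0 : 0 ≤ γ) (hγ1 : γ < 1) (hρ : 0 < ρ)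
    {f : ℝ → ℝ} (hf : Integrable f) (hf0 : ∀ z, 0 ≤ f z) (hf1 : ∀ z, f z ≤ 1) :
    ∫ z, |z| ^ (-γ) * f z ≤ 2 * (ρ ^ (1 - γ) / (1 - γ)) + ρ ^ (-γ) * ∫ z, f z := by
  have h_ind_int : Integrable ((Icc (-ρ) ρ).indicator fun z => |z| ^ (-γ)) :=
    .of_integral_ne_zero (by rw [integral_indicator_Icc_abs_rpow_neg hγ1 hρ.le]; positivity)
  have h_le : ∀ z, |z| ^ (-γ) * f z
      ≤ (Icc (-ρ) ρ).indicator (fun z => |z| ^ (-γ)) z + ρ ^ (-γ) * f z := by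
    intro z
    by_cases hz : |z| ≤ ρ
    · rw [indicator_of_mem (mem_Icc.mpr (abs_le.mp hz))]
      have : 0 ≤ ρ ^ (-γ) * f z := mul_nonneg (by positivity) (hf0 z)
      nlinarith [rpow_nonneg (abs_nonneg z) (-γ), hf1 z]
    · rw [indicator_of_notMem (fun h => hz (abs_le.mpr (mem_Icc.mp h))), zero_add]
      exact mul_le_mul_of_nonneg_right
        (rpow_le_rpow_of_nonpos hρ (not_le.mp hz).le (by linarith)) (hf0 z)
  calc ∫ z, |z| ^ (-γ) * f z
      ≤ ∫ z, ((Icc (-ρ) ρ).indicator (fun z => |z| ^ (-γ)) z + ρ ^ (-γ) * f z) :=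
        integral_mono_of_nonneg (.of_forall fun z => mul_nonneg (by positivity) (hf0 z))
          (h_ind_int.add (hf.const_mul _)) (.of_forall h_le)
    _ = _ := by
      rw [integral_add h_ind_int (hf.const_mul _), integral_const_mul,
        integral_indicator_Icc_abs_rpow_neg hγ1 hρ.le]

lemma kappa_mul_two_div_rpow {γ : ℝ} (hγ0 : 0 ≤ γ) (hγ1 : γ < 1) :
    kappa γ * (2 / (1 - γ)) ^ γ = 2 / (1 - γ) * (γ / 2) ^ (1 - γ) + (γ / 2) ^ (-γ) := by
  have hne : 1 - γ ≠ 0 := by linarith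
  have hb : 0 < (1 - γ) / 2 := by linarith
  have ha : 0 ≤ γ / (1 - γ) := div_nonneg hγ0 (by linarith)
  have h_split : γ / 2 = γ / (1 - γ) * ((1 - γ) / 2) := by field_simp
  have h_inv : 2 / (1 - γ) = ((1 - γ) / 2)⁻¹ := by rw [inv_div]
  have h_pow : ((1 - γ) / 2) ^ (1 + -γ) = (1 - γ) / 2 * ((1 - γ) / 2) ^ (-γ) := by
    rw [rpow_add hb, rpow_one]
  rw [← sub_eq_add_neg] at h_pow
  rw [h_split, mul_rpow ha hb.le, mul_rpow ha hb.le, h_pow, h_inv, inv_rpow hb.le,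
    ← rpow_neg hb.le, kappa]
  field_simp

lemma integral_abs_rpow_neg_mul_gaussian_le {γ c : ℝ} (hγ0 : 0 < γ) (hγ1 : γ < 1) (hc : 0 < c)
    (m : ℝ) :
    ∫ z, |z| ^ (-γ) * exp (-c * (z - m) ^ 2)
      ≤ kappa γ * (2 / (1 - γ)) ^ γ * (π / c) ^ ((1 - γ) / 2) := by
  set S := √(π / c)
  have hS : 0 < S := sqrt_pos.mpr (div_pos pi_pos hc)
  have h_gauss : ∫ z, exp (-c * (z - m) ^ 2) = S := by
    rw [integral_sub_right_eq_self (fun z => exp (-c * z ^ 2)) m, integral_gaussian]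
  have h_exp_le_one (z : ℝ) : exp (-c * (z - m) ^ 2) ≤ 1 :=
    exp_le_one_iff.mpr (by nlinarith [sq_nonneg (z - m)])
  have h_bound := integral_abs_rpow_neg_mul_le_s6 hγ0.le hγ1 (ρ := γ / 2 * S) (by positivity)
    ((integrable_exp_neg_mul_sq hc).comp_sub_right m) (fun z => (exp_pos _).le) h_exp_le_one
  have h_S_pow : S ^ (1 - γ) = (π / c) ^ ((1 - γ) / 2) := by
    rw [show S = (π / c) ^ (1 / 2 : ℝ) from sqrt_eq_rpow _, ← rpow_mul (div_pos pi_pos hc).le,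
      one_div_mul_eq_div]
  have h_S_mul : S ^ (-γ) * S = S ^ (1 - γ) := by
    rw [sub_eq_neg_add, rpow_add hS, rpow_one]
  calc _ ≤ _ := h_bound
    _ = (2 / (1 - γ) * (γ / 2) ^ (1 - γ) + (γ / 2) ^ (-γ)) * S ^ (1 - γ) := by
      rw [h_gauss, mul_rpow (by positivity) hS.le, mul_rpow (by positivity) hS.le, mul_assoc _ _ S,
        h_S_mul]
      ring
    _ = _ := by rw [kappa_mul_two_div_rpow hγ0.le hγ1, h_S_pow]

lemma sq_div_add_sq_div_eq {a b : ℝ} (ha : 0 < a) (hb : 0 < b) (x y z : ℝ) :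
    (x - z) ^ 2 / a + (z - y) ^ 2 / b
      = (a + b) / (a * b) * (z - (b * x + a * y) / (a + b)) ^ 2 + (x - y) ^ 2 / (a + b) := by
  field_simp
  ring

lemma kappa1_nonneg {γ : ℝ} (hγ0 : 0 ≤ γ) (hγ1 : γ < 1) : 0 ≤ kappa1 γ := by
  have : 0 ≤ γ / (1 - γ) := div_nonneg hγ0 (by linarith)
  unfold kappa1 kappa
  positivity

lemma integral_abs_rpow_neg_mul_heat_kernels_le {γ L a b : ℝ} (hγ0 : 0 < γ) (hγ1 : γ < 1)
    (hL : 0 < L) (ha : 0 < a) (hb : 0 < b) (x y : ℝ) :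
    ∫ z, |z| ^ (-γ) * exp (-(L / 2) * ((x - z) ^ 2 / a + (z - y) ^ 2 / b))
      ≤ kappa1 γ * L ^ ((γ - 1) / 2) * (a * b / (a + b)) ^ ((1 - γ) / 2)
        * exp (-(L * (x - y) ^ 2) / (2 * (a + b))) := by
  set c := L * (a + b) / (2 * (a * b))
  set m := (b * x + a * y) / (a + b)
  set E := exp (-(L * (x - y) ^ 2) / (2 * (a + b)))
  have h_split (z : ℝ) : exp (-(L / 2) * ((x - z) ^ 2 / a + (z - y) ^ 2 / b))
      = E * exp (-c * (z - m) ^ 2) := by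
    rw [sq_div_add_sq_div_eq ha hb, ← exp_add]
    congr 1
    simp only [c, m]
    field_simp
    ring
  have h_pi_div : π / c = 2 * π * (a * b / (a + b)) * L⁻¹ := by
    simp only [c]
    field_simp
  have h_pow : (π / c) ^ ((1 - γ) / 2)
      = (2 * π) ^ ((1 - γ) / 2) * (a * b / (a + b)) ^ ((1 - γ) / 2) * L ^ ((γ - 1) / 2) := by
    rw [h_pi_div, mul_rpow (by positivity) (inv_nonneg.mpr hL.le),
      mul_rpow (by positivity) (by positivity), inv_rpow hL.le, ← rpow_neg hL.le,
      show -((1 - γ) / 2) = (γ - 1) / 2 by ring]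
  calc _ = E * ∫ z, |z| ^ (-γ) * exp (-c * (z - m) ^ 2) := by
        simp_rw [h_split, mul_left_comm _ E]
        exact integral_const_mul E _
    _ ≤ E * (kappa γ * (2 / (1 - γ)) ^ γ * (π / c) ^ ((1 - γ) / 2)) := by
        gcongr
        exact integral_abs_rpow_neg_mul_gaussian_le hγ0 hγ1 (by positivity) m
    _ = _ := by
        rw [h_pow, kappa1]
        ring

/-- For γ, δ ∈ (0,1) and s < r < t,
J_δ(x,t,y,s;r) = ∫_ℝ |z|^{-γ} exp(-(1-δ)/2·((x-z)²/(t-r)+(z-y)²/(r-s))) dz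
 ≤ κ₁(γ)·(1-δ)^{(γ-1)/2}·((t-r)(r-s)/(t-s))^{(1-γ)/2}·exp(-(1-γ)(1-δ)(x-y)²/(2(t-s))). -/
theorem stmt_6 (γ δ : ℝ) (hγ : γ ∈ Ioo (0 : ℝ) 1) (hδ : δ ∈ Ioo (0 : ℝ) 1)
    (s r t x y : ℝ) (hsr : s < r) (hrt : r < t) :
    (∫ z : ℝ, |z| ^ (-γ) *
        Real.exp (-((1 - δ) / 2) * ((x - z) ^ 2 / (t - r) + (z - y) ^ 2 / (r - s)))) ≤
      kappa1 γ * (1 - δ) ^ ((γ - 1) / 2) *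
        ((t - r) * (r - s) / (t - s)) ^ ((1 - γ) / 2) *
          Real.exp (-((1 - γ) * (1 - δ) * (x - y) ^ 2) / (2 * (t - s))) := by
  obtain ⟨hγ0, hγ1⟩ := hγ
  have hL : 0 < 1 - δ := sub_pos.mpr hδ.2
  have ha : 0 < t - r := sub_pos.mpr hrt
  have hb : 0 < r - s := sub_pos.mpr hsr
  rw [show t - s = (t - r) + (r - s) by ring]
  calc _ ≤ _ := integral_abs_rpow_neg_mul_heat_kernels_le hγ0 hγ1 hL ha hb x y
    _ ≤ _ := by
      refine mul_le_mul_of_nonneg_left (exp_le_exp.mpr ?_) <| mul_nonneg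
        (mul_nonneg (kappa1_nonneg hγ0.le hγ1) (rpow_nonneg hL.le _))
        (rpow_nonneg (by positivity) _)
      gcongr
      nlinarith [mul_pos hγ0 hL]
end
end

section
/- Let λ ∈ (0,1), c > 0, μ > 0, and set Λ := |ln(1-λ)|. Then for every B > 0 there exists a constant C₁ = C₁(λ,c,μ;B) > 0 such that for all z with z/Λ ≥ e^e one has ψ_{λ,c,μ}(z) ≤ C₁ (1+z)^{-B}; that is, ψ_{λ,c,μ} decays faster than any negative power at infinity. -/
/-!
Since `x ^ k * exp (-x) ≤ k !`, each term `c ^ m exp (-λ ^ m z) / Γ(m μ)` of `ψ` is at most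
`k ! z ^ (-k)` times `(c / λ ^ k) ^ m / Γ(m μ)`, and the latter series converges for every `k`
because `Γ` grows faster than any exponential. Hence `ψ(z) = O(z ^ (-k))` for every `k`, and
`k = ⌈B⌉` gives the bound, `z` being bounded away from `0`.
-/

open Real Set

noncomputable section

/-- ψ_{λ,c,μ}(z) := Σ_{m=1}^∞ c^m exp(-λ^m z)/Γ(mμ). -/
def psiFn (lam c μ z : ℝ) : ℝ :=
  ∑' m : ℕ, c ^ (m + 1) * Real.exp (-(lam ^ (m + 1) * z)) / Real.Gamma (((m : ℝ) + 1) * μ)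

open Filter Topology Nat

theorem Real.tendsto_rpow_div_Gamma_atTop {a : ℝ} (ha : 0 ≤ a) :
    Tendsto (fun x : ℝ => a ^ x / Gamma x) atTop (𝓝 0) := by
  set A := max a 1
  have hA : 1 ≤ A := le_max_right a 1
  have hfloor : Tendsto (fun x : ℝ => ⌊x⌋₊ - 1) atTop atTop :=
    (tendsto_sub_atTop_nat 1).comp tendsto_nat_floor_atTop
  have hbound := (FloorSemiring.tendsto_pow_div_factorial_atTop A).comp hfloor |>.const_mul (A ^ 2)
  rw [mul_zero] at hbound
  refine tendsto_of_tendsto_of_tendsto_of_le_of_le' tendsto_const_nhds hbound ?_ ?_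
  · filter_upwards [eventually_gt_atTop 0] with x hx
    exact div_nonneg (rpow_nonneg ha x) (Gamma_pos_of_pos hx).le
  · filter_upwards [eventually_ge_atTop 2] with x hx
    set m := ⌊x⌋₊ - 1
    have hm : (m : ℝ) + 1 = ⌊x⌋₊ := by
      have : 1 ≤ ⌊x⌋₊ := Nat.le_floor (by norm_num; linarith)
      push_cast [m, Nat.cast_sub this]; ring
    have hmx : (m : ℝ) + 1 ≤ x := hm ▸ Nat.floor_le (by linarith)
    have hxm : x ≤ (m : ℝ) + 2 := by linarith [Nat.lt_floor_add_one x]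
    have h2m : (2 : ℝ) ≤ m + 1 := by
      rw [hm]; exact_mod_cast Nat.le_floor (by exact_mod_cast hx : ((2 : ℕ) : ℝ) ≤ x)
    have hGamma : (m ! : ℝ) ≤ Gamma x :=
      Gamma_nat_eq_factorial m ▸ Gamma_strictMonoOn_Ici.monotoneOn h2m (h2m.trans hmx) hmx
    have hpow : a ^ x ≤ A ^ 2 * A ^ m := by
      calc a ^ x ≤ A ^ x := rpow_le_rpow ha (le_max_left a 1) (by linarith)
        _ ≤ A ^ ((m : ℝ) + 2) := rpow_le_rpow_of_exponent_le hA hxm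
        _ = A ^ 2 * A ^ m := by rw [add_comm, rpow_add (by linarith)]; norm_cast
    calc a ^ x / Gamma x ≤ A ^ 2 * A ^ m / m ! :=
          div_le_div₀ (by positivity) hpow (by positivity) hGamma
      _ = A ^ 2 * (A ^ m / m !) := mul_div_assoc _ _ _

theorem Real.summable_pow_div_Gamma_mul {μ : ℝ} (hμ : 0 < μ) (q : ℝ) :
    Summable (fun n : ℕ => q ^ n / Gamma (n * μ)) := by
  set Q := 2 * |q| + 1
  have hQ : 0 < Q := by positivity
  have hlim := (tendsto_rpow_div_Gamma_atTop (rpow_nonneg hQ.le μ⁻¹)).comp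
    (tendsto_natCast_atTop_atTop.atTop_mul_const hμ)
  refine Summable.of_norm_bounded_eventually_nat
    (summable_geometric_of_lt_one (by norm_num : (0 : ℝ) ≤ 1 / 2) (by norm_num)) ?_
  filter_upwards [hlim.eventually (ge_mem_nhds one_pos), eventually_gt_atTop 0] with n hn hn0
  have hGamma : 0 < Gamma (n * μ) := Gamma_pos_of_pos (by positivity)
  have hexponent : μ⁻¹ * (n * μ) = n := by field_simp
  rw [Function.comp_apply, ← rpow_mul hQ.le, hexponent, rpow_natCast, div_le_one hGamma] at hn
  rw [norm_div, norm_pow, Real.norm_eq_abs, Real.norm_of_nonneg hGamma.le, div_le_iff₀ hGamma]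
  calc |q| ^ n = (1 / 2) ^ n * (2 * |q|) ^ n := by rw [← mul_pow]; ring
    _ ≤ (1 / 2) ^ n * Q ^ n := by gcongr; linarith
    _ ≤ (1 / 2) ^ n * Gamma (n * μ) := by gcongr

theorem Real.pow_mul_exp_neg_le_factorial {x : ℝ} (hx : 0 ≤ x) (k : ℕ) :
    x ^ k * exp (-x) ≤ k ! := by
  rw [exp_neg, ← div_eq_mul_inv, div_le_iff₀ (exp_pos x), ← div_le_iff₀' (by positivity)]
  exact Real.pow_div_factorial_le_exp _ hx k

theorem Real.one_add_rpow_le_mul_pow {z₀ z B : ℝ} {k : ℕ} (hz₀ : 0 < z₀) (hz : z₀ ≤ z)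
    (hBk : B ≤ k) : (1 + z) ^ B ≤ (1 + z₀⁻¹) ^ k * z ^ k := by
  have hz_pos : 0 < z := hz₀.trans_le hz
  have hlin : 1 + z ≤ (1 + z₀⁻¹) * z := by
    rw [add_mul, one_mul, add_comm, inv_mul_eq_div, add_le_add_iff_left, one_le_div hz₀]
    exact hz
  calc (1 + z) ^ B ≤ (1 + z) ^ (k : ℝ) := rpow_le_rpow_of_exponent_le (by linarith) hBk
    _ = (1 + z) ^ k := rpow_natCast _ k
    _ ≤ ((1 + z₀⁻¹) * z) ^ k := pow_le_pow_left₀ (by linarith) hlin k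
    _ = (1 + z₀⁻¹) ^ k * z ^ k := mul_pow _ _ _

section psiFn

variable {lam c μ : ℝ}

theorem summable_pow_succ_div_Gamma (hμ : 0 < μ) (q : ℝ) :
    Summable (fun m : ℕ => q ^ (m + 1) / Gamma (((m : ℝ) + 1) * μ)) := by
  simpa using (summable_nat_add_iff 1).mpr (summable_pow_div_Gamma_mul hμ q)

theorem psiFn_term_le (hlam : 0 < lam) (hc : 0 ≤ c) (hμ : 0 < μ) (k m : ℕ) {z : ℝ} (hz : 0 < z) :
    c ^ (m + 1) * exp (-(lam ^ (m + 1) * z)) / Gamma (((m : ℝ) + 1) * μ) ≤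
      k ! / z ^ k * ((c / lam ^ k) ^ (m + 1) / Gamma (((m : ℝ) + 1) * μ)) := by
  have hx : 0 < lam ^ (m + 1) * z := by positivity
  have hexp : exp (-(lam ^ (m + 1) * z)) ≤ k ! / (lam ^ (m + 1) * z) ^ k := by
    rw [le_div_iff₀' (by positivity)]
    exact pow_mul_exp_neg_le_factorial hx.le k
  rw [← mul_div_assoc]
  gcongr ?_ / _
  calc c ^ (m + 1) * exp (-(lam ^ (m + 1) * z))
      ≤ c ^ (m + 1) * (k ! / (lam ^ (m + 1) * z) ^ k) := by gcongr
    _ = k ! / z ^ k * (c / lam ^ k) ^ (m + 1) := by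
      rw [div_pow, mul_pow, ← pow_mul, ← pow_mul, mul_comm k]
      field_simp

theorem psiFn_le_div_pow (hlam : 0 < lam) (hc : 0 ≤ c) (hμ : 0 < μ) (k : ℕ) {z : ℝ}
    (hz : 0 < z) :
    psiFn lam c μ z ≤
      k ! / z ^ k * ∑' m : ℕ, (c / lam ^ k) ^ (m + 1) / Gamma (((m : ℝ) + 1) * μ) := by
  have hmajorant := (summable_pow_succ_div_Gamma hμ (c / lam ^ k)).mul_left (k ! / z ^ k)
  rw [psiFn, ← tsum_mul_left]
  exact (hmajorant.of_nonneg_of_le (fun m => by positivity)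
    (fun m => psiFn_term_le hlam hc hμ k m hz)).tsum_le_tsum
    (fun m => psiFn_term_le hlam hc hμ k m hz) hmajorant

end psiFn

/-- For λ ∈ (0,1), c, μ > 0 and Λ := |ln(1-λ)|: for every B > 0 there is C₁ > 0
such that ψ_{λ,c,μ}(z) ≤ C₁(1+z)^{-B} whenever z/Λ ≥ e^e. -/
theorem stmt_12 (lam c μ : ℝ) (hlam : lam ∈ Ioo (0 : ℝ) 1) (hc : 0 < c) (hμ : 0 < μ) :
    ∀ B : ℝ, 0 < B → ∃ C₁ : ℝ, 0 < C₁ ∧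
      ∀ z : ℝ, Real.exp 1 ^ Real.exp 1 ≤ z / |Real.log (1 - lam)| →
        psiFn lam c μ z ≤ C₁ * (1 + z) ^ (-B) := by
  intro B _
  obtain ⟨hlam₀, hlam₁⟩ := hlam
  have hΛ : 0 < |Real.log (1 - lam)| := abs_pos.mpr (Real.log_neg (by linarith) (by linarith)).ne
  set z₀ := Real.exp 1 ^ Real.exp 1 * |Real.log (1 - lam)|
  have hz₀ : 0 < z₀ := by positivity
  set k := ⌈B⌉₊
  set S := ∑' m : ℕ, (c / lam ^ k) ^ (m + 1) / Gamma (((m : ℝ) + 1) * μ)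
  have hS : 0 < S :=
    (summable_pow_succ_div_Gamma hμ _).tsum_pos (fun m => by positivity) 0 (by positivity)
  refine ⟨k ! * S * (1 + z₀⁻¹) ^ k, by positivity, fun z hz => ?_⟩
  have hz₀z : z₀ ≤ z := (le_div_iff₀ hΛ).mp hz
  have hz_pos : 0 < z := hz₀.trans_le hz₀z
  calc psiFn lam c μ z ≤ k ! / z ^ k * S := psiFn_le_div_pow hlam₀ hc.le hμ k hz_pos
    _ = k ! * S * (1 + z₀⁻¹) ^ k / ((1 + z₀⁻¹) ^ k * z ^ k) := by field_simp
    _ ≤ k ! * S * (1 + z₀⁻¹) ^ k / (1 + z) ^ B := by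
      gcongr
      exact one_add_rpow_le_mul_pow hz₀ hz₀z (Nat.le_ceil B)
    _ = k ! * S * (1 + z₀⁻¹) ^ k * (1 + z) ^ (-B) := by
      rw [rpow_neg (by linarith), div_eq_mul_inv]
end
end
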